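/- Under the checkout constraints, on any single day an employee's checkout schedule has the following structure: if the employee performs any opCAS slot, then there is exactly one slot t* with clCAS performed, the slot t*−1 is an opCAS slot, and no opCAS slot occurs at any time ≥ t*. -/
import Mathlib


/-- under the checkout constraints (G-checkout), on a single day:
if the employee performs any opCAS slot, then there is exactly one slot `t*`
with clCAS performed, the slot `t*−1` is an opCAS slot, and no opCAS slot
occurs at any time `≥ t*`. -/
theorem checkout_structure
    (t₀ tₙ : ℕ) (ht : t₀ ≤ tₙ)
    (xo xc : ℕ → ℤ)
    (hxo : ∀ t ∈ Finset.Icc t₀ tₙ, xo t = 0 ∨ xo t = 1)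
    (hxc : ∀ t ∈ Finset.Icc t₀ tₙ, xc t = 0 ∨ xc t = 1)
    (M : ℤ) (hM : ((tₙ : ℤ) - t₀ + 1) ≤ M)
    -- (i) opCAS only if some clCAS the same day
    (h1 : (∑ t ∈ Finset.Icc t₀ tₙ, xo t) ≤ M * ∑ t ∈ Finset.Icc t₀ tₙ, xc t)
    -- (ii) at most one clCAS per day
    (h2 : (∑ t ∈ Finset.Icc t₀ tₙ, xc t) ≤ 1)
    -- (iii) no opCAS at or after a clCAS
    (h3 : ∀ t ∈ Finset.Icc t₀ tₙ,
      (∑ t' ∈ Finset.Icc t tₙ, xo t') ≤ M * (1 - xc t))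
    -- (iv) right before clCAS there is an opCAS slot
    (h4 : ∀ t ∈ Finset.Icc t₀ tₙ, t₀ < t → xc t ≤ xo (t - 1)) :
    (∃ t ∈ Finset.Icc t₀ tₙ, xo t = 1) →
    ∃ tstar ∈ Finset.Icc t₀ tₙ,
      xc tstar = 1 ∧
      (∀ t ∈ Finset.Icc t₀ tₙ, xc t = 1 → t = tstar) ∧
      xo (tstar - 1) = 1 ∧
      (∀ t ∈ Finset.Icc t₀ tₙ, tstar ≤ t → xo t = 0) := by
  rintro ⟨s, hs, hxos⟩
  have hxonn : ∀ t ∈ Finset.Icc t₀ tₙ, (0:ℤ) ≤ xo t := by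
    intro t htm; rcases hxo t htm with h | h <;> simp [h]
  have hxcnn : ∀ t ∈ Finset.Icc t₀ tₙ, (0:ℤ) ≤ xc t := by
    intro t htm; rcases hxc t htm with h | h <;> simp [h]
  -- there is some t* with xc t* = 1
  have hex : ∃ ts ∈ Finset.Icc t₀ tₙ, xc ts = 1 := by
    by_contra hno
    push_neg at hno
    have hzero : ∀ t ∈ Finset.Icc t₀ tₙ, xc t = 0 := by
      intro t htm; rcases hxc t htm with h | h
      · exact h
      · exact absurd h (hno t htm)
    have hsum0 : (∑ t ∈ Finset.Icc t₀ tₙ, xc t) = 0 :=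
      Finset.sum_eq_zero hzero
    have hxosum : (1:ℤ) ≤ ∑ t ∈ Finset.Icc t₀ tₙ, xo t := by
      calc (1:ℤ) = xo s := hxos.symm
        _ ≤ _ := Finset.single_le_sum hxonn hs
    rw [hsum0, mul_zero] at h1
    linarith
  obtain ⟨ts, hts, hxcts⟩ := hex
  refine ⟨ts, hts, hxcts, ?_, ?_, ?_⟩
  · -- uniqueness
    intro t htm hxct
    by_contra hne
    have hsub : ({t, ts} : Finset ℕ) ⊆ Finset.Icc t₀ tₙ := by
      intro x hx
      simp only [Finset.mem_insert, Finset.mem_singleton] at hx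
      rcases hx with rfl | rfl <;> assumption
    have h2' : (∑ x ∈ ({t, ts} : Finset ℕ), xc x) ≤
        ∑ x ∈ Finset.Icc t₀ tₙ, xc x := by
      refine Finset.sum_le_sum_of_subset_of_nonneg hsub ?_
      intro x hx _; exact hxcnn x hx
    rw [Finset.sum_pair hne, hxct, hxcts] at h2'
    linarith
  · -- xo (ts - 1) = 1
    have hts0 : t₀ < ts := by
      rcases lt_or_eq_of_le (Finset.mem_Icc.mp hts).1 with h | h
      · exact h
      · exfalso
        have h3' := h3 ts hts
        rw [hxcts] at h3'
        simp only [sub_self, mul_zero] at h3'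
        have hs' : s ∈ Finset.Icc ts tₙ := by
          rw [Finset.mem_Icc] at hs ⊢; omega
        have : (1:ℤ) ≤ ∑ t' ∈ Finset.Icc ts tₙ, xo t' := by
          calc (1:ℤ) = xo s := hxos.symm
            _ ≤ _ := Finset.single_le_sum (fun x hx => hxonn x (by
              rw [Finset.mem_Icc] at hx ⊢; omega)) hs'
        linarith
    have h4' := h4 ts hts hts0
    rw [hxcts] at h4'
    have hmem : ts - 1 ∈ Finset.Icc t₀ tₙ := by
      rw [Finset.mem_Icc] at hts ⊢
      omega
    rcases hxo (ts - 1) hmem with h | h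
    · rw [h] at h4'; linarith
    · exact h
  · -- no opCAS at or after ts
    intro t htm hle
    have h3' := h3 ts hts
    rw [hxcts] at h3'
    simp only [sub_self, mul_zero] at h3'
    have hnn : ∀ x ∈ Finset.Icc ts tₙ, (0:ℤ) ≤ xo x := by
      intro x hx
      exact hxonn x (Finset.mem_Icc.mpr ⟨le_trans (Finset.mem_Icc.mp hts).1
        (Finset.mem_Icc.mp hx).1, (Finset.mem_Icc.mp hx).2⟩)
    have hallzero := Finset.sum_eq_zero_iff_of_nonneg hnn |>.mp
      (le_antisymm h3' (Finset.sum_nonneg hnn))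
    exact hallzero t (Finset.mem_Icc.mpr ⟨hle, (Finset.mem_Icc.mp htm).2⟩)
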